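/- arXiv:1801.08011 — 4 statements merged into one kernel-verified Lean document; each statement's English description precedes it below -/
import Mathlib

section
/- If f : E → ℝ is a convex function on a finite-dimensional Euclidean space E attaining its minimum f⋆ at x⋆, and f is sup-quadratic at x⋆ with characteristic τ > 0 (i.e., f(y) - f(x⋆) ≥ g·(y - x⋆) + (τ/2)‖y - x⋆‖² for all y and all g in the subdifferential ∂f(x⋆)), then the conjugate function f* satisfies f*(g) - f*(0) ≤ g·x⋆ + (1/(2τ))‖g‖² for all g, i.e., f* is sub-quadratic at 0 with characteristic at least τ⁻¹. -/
open scoped RealInnerProductSpace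
open Filter

variable {E : Type*} [NormedAddCommGroup E] [InnerProductSpace ℝ E] [FiniteDimensional ℝ E]

/-- Fenchel conjugate `f*(g) = sup_x (g·x - f x)` (real-valued supremum). -/
noncomputable def conj (f : E → ℝ) (g : E) : ℝ := ⨆ x, (⟪g, x⟫ - f x)

/-- Subdifferential of a finite convex function. -/
def subdiff (f : E → ℝ) (x : E) : Set E := {g | ∀ y, f y - f x ≥ ⟪g, y - x⟫}

/-- Epigraph of the conjugate function: `{(μ, g) : μ ≥ f*(g)}` (including the
domain condition, correct even where `f* = +∞`). -/
def epiConj (f : E → ℝ) : Set (ℝ × E) := {p | ∀ x, ⟪p.2, x⟫ - f x ≤ p.1}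

/-- Subdifferential of the conjugate `f*` at `g₀`: `x` with
`f*(g) ≥ f*(g₀) + x·(g - g₀)` for all `g` (stated via upper bounds `μ ≥ f*(g)`). -/
def subdiffConj (f : E → ℝ) (g₀ : E) : Set E :=
  {x | ∀ p ∈ epiConj f, p.1 - conj f g₀ ≥ ⟪x, p.2 - g₀⟫}

/-- Directional derivative of the conjugate: `∂f*(g₀; d) = sup_{x ∈ ∂f*(g₀)} x·d`. -/
noncomputable def dirDConj (f : E → ℝ) (g₀ d : E) : ℝ :=
  sSup ((fun x => ⟪x, d⟫) '' subdiffConj f g₀)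

/-- Directional derivative of a finite convex function `h`:
`∂h(g; d) = sup_{x ∈ ∂h(g)} x·d`. -/
noncomputable def dirD (h : E → ℝ) (g d : E) : ℝ :=
  sSup ((fun x => ⟪x, d⟫) '' subdiff h g)

/-! If `f` grows at least quadratically away from its minimiser `xs`, then in
`f*(g) = sup_y (⟪g, y⟫ - f y)` each term is at most `⟪g, xs⟫ - f xs` plus a concave quadratic in
`‖y - xs‖`, whose maximum is `‖g‖² / (2τ)`; and `f*(0) = -f xs`. Applying sup-quadraticity with
the subgradient `0 ∈ ∂f(xs)` gives exactly this quadratic growth. -/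

theorem mul_sub_half_mul_sq_le {a t τ : ℝ} (hτ : 0 < τ) :
    a * t - τ / 2 * t ^ 2 ≤ 1 / (2 * τ) * a ^ 2 := by
  rw [one_div, inv_mul_eq_div, le_div_iff₀ (by positivity)]
  nlinarith [sq_nonneg (τ * t - a)]

omit [FiniteDimensional ℝ E] in
theorem inner_sub_half_mul_norm_sq_le (g v : E) {τ : ℝ} (hτ : 0 < τ) :
    ⟪g, v⟫ - τ / 2 * ‖v‖ ^ 2 ≤ 1 / (2 * τ) * ‖g‖ ^ 2 := by
  linarith [real_inner_le_norm g v, mul_sub_half_mul_sq_le (a := ‖g‖) (t := ‖v‖) hτ]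

omit [FiniteDimensional ℝ E] in
theorem zero_mem_subdiff_of_forall_le {f : E → ℝ} {x : E} (hmin : ∀ y, f x ≤ f y) :
    (0 : E) ∈ subdiff f x := fun y => by
  simpa [inner_zero_left] using hmin y

omit [FiniteDimensional ℝ E] in
theorem conj_zero_of_forall_le {f : E → ℝ} {x : E} (hmin : ∀ y, f x ≤ f y) :
    conj f 0 = -f x := by
  simp only [conj, inner_zero_left, zero_sub]
  exact le_antisymm (ciSup_le fun y => neg_le_neg (hmin y))
    (le_ciSup (f := fun y => -f y) ⟨-f x, by rintro _ ⟨y, rfl⟩; exact neg_le_neg (hmin y)⟩ x)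

omit [FiniteDimensional ℝ E] in
theorem conj_le_of_quadratic_growth {f : E → ℝ} {x : E} {τ : ℝ} (hτ : 0 < τ)
    (hgrowth : ∀ y, f y - f x ≥ τ / 2 * ‖y - x‖ ^ 2) (g : E) :
    conj f g ≤ ⟪g, x⟫ - f x + 1 / (2 * τ) * ‖g‖ ^ 2 :=
  ciSup_le fun y => by
    have hsplit : ⟪g, y⟫ = ⟪g, x⟫ + ⟪g, y - x⟫ := by rw [← inner_add_right, add_sub_cancel]
    linarith [hgrowth y, inner_sub_half_mul_norm_sq_le g (y - x) hτ]

theorem conj_subquadratic_of_supquadratic_general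
    (f : E → ℝ) (xs : E) (hmin : ∀ y, f xs ≤ f y)
    (τ : ℝ) (hτ : 0 < τ)
    (hsq : ∀ g ∈ subdiff f xs, ∀ y,
      f y - f xs ≥ ⟪g, y - xs⟫ + τ / 2 * ‖y - xs‖ ^ 2) :
    ∀ g : E, conj f g - conj f 0 ≤ ⟪g, xs⟫ + 1 / (2 * τ) * ‖g‖ ^ 2 := by
  have hgrowth : ∀ y, f y - f xs ≥ τ / 2 * ‖y - xs‖ ^ 2 := by
    simpa only [inner_zero_left, zero_add] using hsq 0 (zero_mem_subdiff_of_forall_le hmin)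
  intro g
  rw [conj_zero_of_forall_le hmin]
  linarith [conj_le_of_quadratic_growth hτ hgrowth g]

/-- sup-quadratic at a minimizer implies the conjugate is
sub-quadratic at 0 with characteristic at least τ⁻¹. -/
theorem conj_subquadratic_of_supquadratic
    (f : E → ℝ) (hf : ConvexOn ℝ Set.univ f) (xs : E) (hmin : ∀ y, f xs ≤ f y)
    (τ : ℝ) (hτ : 0 < τ)
    (hsq : ∀ g ∈ subdiff f xs, ∀ y,
      f y - f xs ≥ ⟪g, y - xs⟫ + τ / 2 * ‖y - xs‖ ^ 2) :
    ∀ g : E, conj f g - conj f 0 ≤ ⟪g, xs⟫ + 1 / (2 * τ) * ‖g‖ ^ 2 :=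
  conj_subquadratic_of_supquadratic_general f xs hmin τ hτ hsq
end

section
/- If f : E → ℝ is convex with minimizer x⋆ and 0 lies in the interior of the subdifferential ∂f(x⋆) (sharp minimum), then there exists ρ > 0 such that for all g with ‖g‖ < ρ, the conjugate function satisfies f*(g) = g·x⋆ - f(x⋆); i.e., f* is linear on a neighborhood of 0. -/
/-!
A subgradient `g` of `f` at `x⋆` makes `x⋆` a maximizer of `x ↦ ⟪g, x⟫ - f x`, so
`f*(g) = ⟪g, x⋆⟫ - f x⋆` (the equality case of Fenchel–Young). A sharp minimum means that
every `g` in a ball around `0` is such a subgradient.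
-/

open scoped RealInnerProductSpace
open Filter

variable {E : Type*} [NormedAddCommGroup E] [InnerProductSpace ℝ E] [FiniteDimensional ℝ E]

section

variable {F : Type*} [NormedAddCommGroup F] [InnerProductSpace ℝ F] {f : F → ℝ} {x g : F}

theorem inner_sub_le_of_mem_subdiff (hg : g ∈ subdiff f x) (y : F) :
    ⟪g, y⟫ - f y ≤ ⟪g, x⟫ - f x := by
  have hsub : f y - f x ≥ ⟪g, y - x⟫ := hg y
  rw [inner_sub_right] at hsub
  linarith

theorem conj_eq_of_mem_subdiff (hg : g ∈ subdiff f x) : conj f g = ⟪g, x⟫ - f x :=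
  le_antisymm (ciSup_le (inner_sub_le_of_mem_subdiff hg))
    (le_ciSup ⟨_, Set.forall_mem_range.mpr (inner_sub_le_of_mem_subdiff hg)⟩ x)

end

theorem conj_linear_near_zero_of_sharp_min_general
    (f : E → ℝ) (xs : E)
    (hsharp : (0 : E) ∈ interior (subdiff f xs)) :
    ∃ ρ > (0 : ℝ), ∀ g : E, ‖g‖ < ρ → conj f g = ⟪g, xs⟫ - f xs := by
  obtain ⟨ρ, hρ, hball⟩ := Metric.mem_nhds_iff.mp (mem_interior_iff_mem_nhds.mp hsharp)
  exact ⟨ρ, hρ, fun g hg => conj_eq_of_mem_subdiff (hball (mem_ball_zero_iff.mpr hg))⟩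

/-- sharp minimum implies the conjugate is linear near 0. -/
theorem conj_linear_near_zero_of_sharp_min
    (f : E → ℝ) (hf : ConvexOn ℝ Set.univ f) (xs : E) (hmin : ∀ y, f xs ≤ f y)
    (hsharp : (0 : E) ∈ interior (subdiff f xs)) :
    ∃ ρ > (0 : ℝ), ∀ g : E, ‖g‖ < ρ → conj f g = ⟪g, xs⟫ - f xs :=
  conj_linear_near_zero_of_sharp_min_general f xs hsharp
end

section
/- Let f : E → ℝ be convex with finite minimum f⋆ attained, f* its conjugate, ξ < f*(0), and let (ξ_p, g_p) with ξ_p = f*(g_p) be the projection of (ξ, 0) onto epi f*. Define ξ' = ξ + ‖g_p‖²/(ξ_p - ξ). Then ξ ≤ ξ' ≤ f*(0), and ξ' = ξ if and only if g_p = 0. -/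
/-!
The segment from the projection `(ξ_p, g_p)` to `(f*(0), 0)` lies in the convex set `epi f*`
(the latter point belongs to it because `f` is bounded below), so the variational inequality
of the projection of `(ξ, 0)` gives `‖g_p‖² ≤ (ξ_p - ξ) (f*(0) - ξ_p)`. Dividing by
`ξ_p - ξ > 0` yields `ξ' ≤ f*(0) - (ξ_p - ξ) < f*(0)`, and `ξ' = ξ` exactly when `‖g_p‖² = 0`.
-/

open scoped RealInnerProductSpace
open Filter

variable {E : Type*} [NormedAddCommGroup E] [InnerProductSpace ℝ E] [FiniteDimensional ℝ E]

section

variable {F : Type*} [NormedAddCommGroup F] [InnerProductSpace ℝ F]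

theorem real_inner_le_zero_of_isMinOn_norm_sub {K : Set F} (hK : Convex ℝ K) {u v : F}
    (hv : v ∈ K) (hmin : IsMinOn (fun w => ‖u - w‖) K v) {w : F} (hw : w ∈ K) :
    ⟪u - v, w - v⟫ ≤ 0 := by
  have : Nonempty K := ⟨⟨v, hv⟩⟩
  refine (norm_eq_iInf_iff_real_inner_le_zero hK hv).1 (le_antisymm ?_ ?_) w hw
  · exact le_ciInf fun w => hmin w.2
  · exact ciInf_le ⟨0, by rintro _ ⟨w, rfl⟩; positivity⟩ (⟨v, hv⟩ : K)

theorem mul_add_inner_le_zero_of_forall_sq_add_sq_le {S : Set (ℝ × F)} (hS : Convex ℝ S)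
    {a μ : ℝ} {z g : F} (hp : (μ, g) ∈ S)
    (hproj : ∀ q ∈ S, (μ - a) ^ 2 + ‖g - z‖ ^ 2 ≤ (q.1 - a) ^ 2 + ‖q.2 - z‖ ^ 2)
    {q : ℝ × F} (hq : q ∈ S) : (a - μ) * (q.1 - μ) + ⟪z - g, q.2 - g⟫ ≤ 0 := by
  -- `ℝ × F` carries the sup norm; the Euclidean one lives on `WithLp 2 (ℝ × F)`.
  set K : Set (WithLp 2 (ℝ × F)) := WithLp.ofLp ⁻¹' S
  have hK : Convex ℝ K := hS.linear_preimage (WithLp.linearEquiv 2 ℝ (ℝ × F)).toLinearMap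
  have hmin : IsMinOn (fun w => ‖WithLp.toLp 2 (a, z) - w‖) K (WithLp.toLp 2 (μ, g)) := by
    intro w hw
    rw [Set.mem_ofPred_eq, ← sq_le_sq₀ (norm_nonneg _) (norm_nonneg _),
      WithLp.prod_norm_sq_eq_of_L2, WithLp.prod_norm_sq_eq_of_L2]
    simpa [norm_sub_rev z, Real.norm_eq_abs, sub_sq_comm a] using hproj _ hw
  simpa [mul_comm] using
    real_inner_le_zero_of_isMinOn_norm_sub hK hp hmin (w := WithLp.toLp 2 q) hq

theorem convex_epiConj (f : F → ℝ) : Convex ℝ (epiConj f) := by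
  intro p hp q hq a b ha hb hab x
  have hpx := hp x
  have hqx := hq x
  simp only [Prod.snd_add, Prod.smul_snd, Prod.fst_add, Prod.smul_fst, smul_eq_mul, inner_add_left,
    real_inner_smul_left] at hpx hqx ⊢
  have hfx : f x = a * f x + b * f x := by rw [← add_mul, hab, one_mul]
  nlinarith [mul_le_mul_of_nonneg_left hpx ha, mul_le_mul_of_nonneg_left hqx hb]

theorem conj_zero_mem_epiConj {f : F → ℝ} (hf : BddBelow (Set.range f)) :
    (conj f 0, (0 : F)) ∈ epiConj f := by
  obtain ⟨m, hm⟩ := hf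
  intro x
  refine le_ciSup (f := fun x => ⟪(0 : F), x⟫ - f x) ⟨-m, ?_⟩ x
  rintro _ ⟨y, rfl⟩
  simp only [inner_zero_left, zero_sub, neg_le_neg_iff]
  exact hm ⟨y, rfl⟩

theorem sq_norm_le_mul_of_isProjection_epiConj {f : F → ℝ} (hf : BddBelow (Set.range f))
    {ξ ξp : ℝ} {gp : F} (hepi : (ξp, gp) ∈ epiConj f)
    (hproj : ∀ p ∈ epiConj f, (ξp - ξ) ^ 2 + ‖gp‖ ^ 2 ≤ (p.1 - ξ) ^ 2 + ‖p.2‖ ^ 2) :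
    ‖gp‖ ^ 2 ≤ (ξp - ξ) * (conj f 0 - ξp) := by
  have h := mul_add_inner_le_zero_of_forall_sq_add_sq_le (z := 0) (convex_epiConj f) hepi
    (by simpa using hproj) (conj_zero_mem_epiConj hf)
  rw [real_inner_self_eq_norm_sq, zero_sub, norm_neg] at h
  linarith

end

theorem update_monotone_bounded_general
    (f : E → ℝ) (hmin : ∃ xs : E, ∀ y, f xs ≤ f y)
    (ξ ξp : ℝ) (gp : E)
    (hepi : (ξp, gp) ∈ epiConj f) (hlt : ξ < ξp)
    (hproj : ∀ p ∈ epiConj f,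
      (ξp - ξ) ^ 2 + ‖gp‖ ^ 2 ≤ (p.1 - ξ) ^ 2 + ‖p.2‖ ^ 2) :
    ξ ≤ ξ + ‖gp‖ ^ 2 / (ξp - ξ) ∧ ξ + ‖gp‖ ^ 2 / (ξp - ξ) ≤ conj f 0 ∧
      (ξ + ‖gp‖ ^ 2 / (ξp - ξ) = ξ ↔ gp = 0) := by
  obtain ⟨xs, hxs⟩ := hmin
  have hgap : 0 < ξp - ξ := sub_pos.2 hlt
  have key := sq_norm_le_mul_of_isProjection_epiConj ⟨f xs, Set.forall_mem_range.2 hxs⟩ hepi hproj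
  have hstep : ‖gp‖ ^ 2 / (ξp - ξ) ≤ conj f 0 - ξp := (div_le_iff₀' hgap).2 key
  refine ⟨le_add_of_nonneg_right (by positivity), by linarith, ?_⟩
  rw [add_eq_left, div_eq_zero_iff, or_iff_left hgap.ne', sq_eq_zero_iff, norm_eq_zero]

/-- the update ξ' = ξ + ‖g_p‖²/(ξ_p − ξ) satisfies
ξ ≤ ξ' ≤ f*(0), with ξ' = ξ iff g_p = 0. -/
theorem update_monotone_bounded
    (f : E → ℝ) (hf : ConvexOn ℝ Set.univ f) (hmin : ∃ xs : E, ∀ y, f xs ≤ f y)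
    (ξ ξp : ℝ) (gp : E) (hξ : ξ < conj f 0)
    (hepi : (ξp, gp) ∈ epiConj f) (hval : ξp = conj f gp) (hlt : ξ < ξp)
    (hproj : ∀ p ∈ epiConj f,
      (ξp - ξ) ^ 2 + ‖gp‖ ^ 2 ≤ (p.1 - ξ) ^ 2 + ‖p.2‖ ^ 2) :
    ξ ≤ ξ + ‖gp‖ ^ 2 / (ξp - ξ) ∧ ξ + ‖gp‖ ^ 2 / (ξp - ξ) ≤ conj f 0 ∧
      (ξ + ‖gp‖ ^ 2 / (ξp - ξ) = ξ ↔ gp = 0) :=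
  update_monotone_bounded_general f hmin ξ ξp gp hepi hlt hproj
end

section
/- If ξ < f*(0) and the projection of (ξ, 0) onto the closed convex set epi f* is the point (ξ_p, g_p) with ξ_p = ξ (no vertical progress), then the line ℝ × {0} is strictly separated from epi f*, contradicting 0 ∈ dom f*. Hence if 0 ∈ dom f*, then ξ_p > ξ strictly. -/
open scoped RealInnerProductSpace
open Filter

variable {E : Type*} [NormedAddCommGroup E] [InnerProductSpace ℝ E] [FiniteDimensional ℝ E]

/-! Since `(μ, 0) ∈ epi f*`, the whole vertical ray `(ν, 0)`, `ν ≥ μ`, lies in `epi f*`. Testing the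
projection's variational inequality against it gives `‖g_p‖² ≤ (ξ_p - ξ)(ν - ξ_p)` for all large `ν`,
which forces `ξ_p ≥ ξ`. If `ξ_p = ξ`, the same inequality gives `g_p = 0`, so `(ξ, 0) ∈ epi f*` and
`f*(0) ≤ ξ`. -/

section

variable {F : Type*} [NormedAddCommGroup F] [InnerProductSpace ℝ F] {f : F → ℝ}

theorem epiConj_mono_fst {μ ν : ℝ} {g : F} (h : (μ, g) ∈ epiConj f) (hμν : μ ≤ ν) :
    (ν, g) ∈ epiConj f :=
  fun x => (h x).trans hμν

theorem conj_le_of_mem_epiConj {μ : ℝ} {g : F} (h : (μ, g) ∈ epiConj f) : conj f g ≤ μ :=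
  ciSup_le h

end

theorem nonneg_of_forall_nonneg_mul_sub {c a μ : ℝ} (h : ∀ ν, μ ≤ ν → 0 ≤ c * (ν - a)) :
    0 ≤ c :=
  nonneg_of_mul_nonneg_left (h (max μ (a + 1)) (le_max_left _ _))
    (by linarith [le_max_right μ (a + 1)])

theorem proj_strictly_above_of_zero_mem_dom_general
    (f : E → ℝ)
    (hdom : ∃ μ : ℝ, (μ, (0 : E)) ∈ epiConj f)
    (ξ ξp : ℝ) (gp : E) (hξ : ξ < conj f 0)
    (hepi : (ξp, gp) ∈ epiConj f)
    (hopt : ∀ p ∈ epiConj f, (ξp - ξ) * (p.1 - ξp) + ⟪gp, p.2 - gp⟫ ≥ 0) :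
    ξ < ξp := by
  obtain ⟨μ, hμ⟩ := hdom
  have hray : ∀ ν, μ ≤ ν → ‖gp‖ ^ 2 ≤ (ξp - ξ) * (ν - ξp) := fun ν hν => by
    have := hopt _ (epiConj_mono_fst hμ hν)
    rw [zero_sub, inner_neg_right, real_inner_self_eq_norm_sq] at this
    linarith
  have hle : ξ ≤ ξp := sub_nonneg.1 <| nonneg_of_forall_nonneg_mul_sub fun ν hν =>
    (sq_nonneg ‖gp‖).trans (hray ν hν)
  refine hle.lt_of_ne fun hξp => hξ.not_ge ?_
  have hgp : gp = 0 := by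
    have := hray μ le_rfl
    rw [← hξp, sub_self, zero_mul] at this
    exact norm_eq_zero.1 (pow_eq_zero_iff two_ne_zero |>.1 (le_antisymm this (sq_nonneg _)))
  rw [hξp]
  exact conj_le_of_mem_epiConj (hgp ▸ hepi)

/-- if 0 ∈ dom f*, the projection of (ξ, 0), ξ < f*(0), onto
epi f* satisfies ξ_p > ξ strictly (ξ_p = ξ would strictly separate ℝ × {0}
from epi f*, contradicting 0 ∈ dom f*). -/
theorem proj_strictly_above_of_zero_mem_dom
    (f : E → ℝ) (hf : ConvexOn ℝ Set.univ f)
    (hdom : ∃ μ : ℝ, (μ, (0 : E)) ∈ epiConj f)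
    (ξ ξp : ℝ) (gp : E) (hξ : ξ < conj f 0)
    (hepi : (ξp, gp) ∈ epiConj f)
    (hopt : ∀ p ∈ epiConj f, (ξp - ξ) * (p.1 - ξp) + ⟪gp, p.2 - gp⟫ ≥ 0)
    (hproj : ∀ p ∈ epiConj f,
      (ξp - ξ) ^ 2 + ‖gp‖ ^ 2 ≤ (p.1 - ξ) ^ 2 + ‖p.2‖ ^ 2) :
    ξ < ξp :=
  proj_strictly_above_of_zero_mem_dom_general f hdom ξ ξp gp hξ hepi hopt
end
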